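/- arXiv:2007.09857 — 3 statements merged into one kernel-verified Lean document; each statement's English description precedes it below -/
import Mathlib

section
/- For every commutative ring R, the coequalizer in the category of commutative rings of the two evaluation homomorphisms ev₀, ev₁ : R[X] → R (sending a polynomial f to f(0) and to f(1) respectively) is the zero ring; that is, the underlying type of this coequalizer is a subsingleton. -/
open CategoryTheory Limits Polynomial

theorem CommRingCat.subsingleton_coequalizer_of_apply_eq_zero_of_apply_eq_one
    {A B : CommRingCat} (f g : A ⟶ B) {a : A} (hf : f a = 0) (hg : g a = 1) :
    Subsingleton (coequalizer f g : CommRingCat) := by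
  have hπ : coequalizer.π f g (f a) = coequalizer.π f g (g a) := by
    rw [← CommRingCat.comp_apply, ← CommRingCat.comp_apply, coequalizer.condition]
  rw [hf, hg, map_zero, map_one] at hπ
  exact subsingleton_of_zero_eq_one hπ

/-- The coequalizer, in the category of commutative rings, of the two evaluation
homomorphisms `ev₀, ev₁ : R[X] → R` (evaluation of a polynomial at `0` and at `1`)
is the zero ring. -/
theorem coequalizer_aeval_zero_one_subsingleton (R : Type) [CommRing R] :
    Subsingleton
      (coequalizer
        (CommRingCat.ofHom ((Polynomial.aeval (0 : R)).toRingHom : Polynomial R →+* R))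
        (CommRingCat.ofHom ((Polynomial.aeval (1 : R)).toRingHom : Polynomial R →+* R)) :
        CommRingCat) :=
  CommRingCat.subsingleton_coequalizer_of_apply_eq_zero_of_apply_eq_one _ _
    (a := (X : R[X])) (by simp) (by simp)
end

section
/- Let k be a field of characteristic p > 0. The set A = {f ∈ k[X] : D f = 0}, where D : k[X] → Ω¹_{k[X]/k} is the universal derivation, is a k-subalgebra of k[X], and the coequalizer in the category of commutative rings of the two homomorphisms A → k obtained by restricting evaluation at 0 and evaluation at 1 to A is the zero ring. -/
open CategoryTheory Limits Polynomial

/-!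
In characteristic `p > 0` we have `D (X ^ p) = p • X ^ (p - 1) • D X = 0`, so `X ^ p` lies in `A`.
Evaluation at `0` sends it to `0` and evaluation at `1` sends it to `1`, hence the coequalizer
identifies `0` with `1`.
-/

namespace Derivation

variable {R A M : Type*} [CommSemiring R] [CommSemiring A] [Algebra R A]
  [AddCommMonoid M] [Module A M] [Module R M]

theorem map_pow_char (D : Derivation R A M) (p : ℕ) [CharP A p] (a : A) : D (a ^ p) = 0 := by
  rw [leibniz_pow, ← Nat.cast_smul_eq_nsmul A, CharP.cast_eq_zero, zero_smul]

def kerSubalgebra [IsScalarTower R A M] (D : Derivation R A M) : Subalgebra R A where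
  carrier := {a | D a = 0}
  mul_mem' {a b} (ha : D a = 0) (hb : D b = 0) := by simp [ha, hb]
  add_mem' {a b} (ha : D a = 0) (hb : D b = 0) := by simp [ha, hb]
  algebraMap_mem' r := D.map_algebraMap r

end Derivation

theorem CommRingCat.subsingleton_coequalizer_of_map_eq_zero_of_map_eq_one {R S : CommRingCat}
    (f g : R ⟶ S) (a : R) (hf : f a = 0) (hg : g a = 1) :
    Subsingleton (coequalizer f g : CommRingCat) := by
  have h := ConcreteCategory.congr_hom (coequalizer.condition f g) a
  simp only [ConcreteCategory.comp_apply, hf, hg, map_zero, map_one] at h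
  exact subsingleton_of_zero_eq_one h

/-- Let `k` be a field of characteristic `p > 0`.  The set
`{f ∈ k[X] : D f = 0}`, where `D` is the universal derivation into the Kähler
differentials of `k[X]` over `k`, is a `k`-subalgebra `A` of `k[X]`, and the coequalizer
in the category of commutative rings of the two homomorphisms `A → k` obtained by
restricting evaluation at `0` and evaluation at `1` to `A` is the zero ring. -/
theorem ker_D_subalgebra_coequalizer_subsingleton
    (k : Type) [Field k] (p : ℕ) (hp : 0 < p) [CharP k p] :
    ∃ A : Subalgebra k (Polynomial k),
      (A : Set (Polynomial k)) = {f | KaehlerDifferential.D k (Polynomial k) f = 0} ∧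
      Subsingleton
        (coequalizer
          (CommRingCat.ofHom
            (((Polynomial.aeval (0 : k)).comp A.val).toRingHom : A →+* k))
          (CommRingCat.ofHom
            (((Polynomial.aeval (1 : k)).comp A.val).toRingHom : A →+* k)) :
          CommRingCat) := by
  let D := KaehlerDifferential.D k (Polynomial k)
  refine ⟨D.kerSubalgebra, rfl, ?_⟩
  apply CommRingCat.subsingleton_coequalizer_of_map_eq_zero_of_map_eq_one _ _
    (⟨X ^ p, D.map_pow_char p X⟩ : D.kerSubalgebra)
  · simp [hp.ne']
  · simp
end

section
/- Let R be a commutative ring and let X be a simplicial object in the category of commutative rings such that the object of X in simplicial degree 0 is R, the object in simplicial degree 1 is the polynomial ring R[X], and the two face maps X₁ → X₀ are the evaluation homomorphisms ev₀ and ev₁ (evaluation at 0 and at 1). Then the colimit of X over Δᵒᵖ is the zero ring (its underlying type is a subsingleton). -/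
open CategoryTheory Limits Simplicial Polynomial

/-! Both face maps `X₁ → X₀` become equal after composing with the colimit injection of `X₀`,
so the colimit receives a ring map from `R` that coequalizes evaluation at `0` and at `1`.
Applied to the variable `X`, this gives `0 = 1` in the colimit. -/

theorem CategoryTheory.SimplicialObject.δ_comp_colimit_ι_eq {C : Type*} [Category C]
    (X : SimplicialObject C) [HasColimit X] {n : ℕ} (i j : Fin (n + 2)) :
    X.δ i ≫ colimit.ι X (Opposite.op ⦋n⦌) = X.δ j ≫ colimit.ι X (Opposite.op ⦋n⦌) := by
  rw [SimplicialObject.δ, SimplicialObject.δ, colimit.w, colimit.w]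

theorem subsingleton_of_comp_aeval_zero_eq_comp_aeval_one {R S : Type*} [CommSemiring R]
    [Semiring S] (f : R →+* S)
    (h : f.comp (aeval (R := R) 0).toRingHom = f.comp (aeval (R := R) 1).toRingHom) :
    Subsingleton S :=
  subsingleton_of_zero_eq_one <| by simpa using RingHom.congr_fun h X

/-- Let `X` be a simplicial commutative ring whose ring of `0`-simplices is `R`, whose ring
of `1`-simplices is the polynomial ring `R[X]`, and whose two face maps `X₁ → X₀` are the
evaluation homomorphisms at `0` and at `1`.  Then the colimit of `X` over `Δᵒᵖ` is the
zero ring. -/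
theorem colimit_simplicial_ring_eval_zero_one_subsingleton
    (R : Type) [CommRing R] (X : CategoryTheory.SimplicialObject CommRingCat)
    (h0 : X _⦋0⦌ = CommRingCat.of R)
    (h1 : X _⦋1⦌ = CommRingCat.of (Polynomial R))
    (hd0 : X.δ (0 : Fin 2) =
      eqToHom h1 ≫
        CommRingCat.ofHom ((Polynomial.aeval (0 : R)).toRingHom : Polynomial R →+* R) ≫
          eqToHom h0.symm)
    (hd1 : X.δ (1 : Fin 2) =
      eqToHom h1 ≫
        CommRingCat.ofHom ((Polynomial.aeval (1 : R)).toRingHom : Polynomial R →+* R) ≫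
          eqToHom h0.symm) :
    Subsingleton ((colimit (X : SimplexCategoryᵒᵖ ⥤ CommRingCat) : CommRingCat)) := by
  have hδ := SimplicialObject.δ_comp_colimit_ι_eq X (0 : Fin 2) 1
  rw [hd0, hd1] at hδ
  simp only [Category.assoc, cancel_epi] at hδ
  exact subsingleton_of_comp_aeval_zero_eq_comp_aeval_one
    (eqToHom h0.symm ≫ colimit.ι X (Opposite.op ⦋0⦌)).hom
    (congrArg CommRingCat.Hom.hom hδ)
end
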